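/- For all n ≥ 1 and 1 ≤ k ≤ n, the rational number F_n!·F_{n-1}!/(F_k!·F_{n-k}!·F_{k-1}!·F_{n-k+1}!) is a positive integer. -/
import Mathlib

/-- The Fibonacci factorial `F_n! = F_n · F_{n-1} · ⋯ · F_1`, with `F_0! = 1`. -/
def fibFact : ℕ → ℕ
  | 0 => 1
  | n + 1 => Nat.fib (n + 1) * fibFact n

/-- The fibonomial coefficient `binom(n,k)_F = F_n!/(F_k!·F_{n-k}!)` for `0 ≤ k ≤ n`,
and `0` otherwise. Indices are integers so that negative arguments make sense. -/
def fibBinom (n k : ℤ) : ℕ :=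
  if 0 ≤ k ∧ k ≤ n then fibFact n.toNat / (fibFact k.toNat * fibFact (n - k).toNat) else 0

lemma fibFact_pos (n : ℕ) : 0 < fibFact n := by
  induction n with
  | zero => simp [fibFact]
  | succ n ih =>
    have : 0 < Nat.fib (n + 1) := Nat.fib_pos.2 (Nat.succ_pos n)
    simpa [fibFact] using Nat.mul_pos this ih

/-- Fibonomial coefficients are integers: key divisibility. -/
lemma fibFact_dvd (n : ℕ) : ∀ k ≤ n, fibFact k * fibFact (n - k) ∣ fibFact n := by
  induction n with
  | zero => intro k hk; interval_cases k; simp [fibFact]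
  | succ n ih =>
    intro k hk
    match k, hk with
    | 0, _ => simp [fibFact]
    | j + 1, hk =>
      rcases eq_or_lt_of_le hk with h | h
      · obtain rfl : j = n := by omega
        simp [fibFact]
      · have hjn : j + 1 ≤ n := Nat.lt_succ_iff.mp h
        set r := n - (j + 1) with hr
        have hnr : n = j + 1 + r := by omega
        have h1 : n + 1 - (j + 1) = r + 1 := by omega
        have hfib : Nat.fib (n + 1) =
            Nat.fib j * Nat.fib (r + 1) + Nat.fib (j + 1) * Nat.fib (r + 2) := by
          have := Nat.fib_add j (r + 1)
          rw [hnr]; convert this using 2 <;> omega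
        rw [h1]
        have hsplit : fibFact (n + 1) =
            Nat.fib j * Nat.fib (r + 1) * fibFact n +
              Nat.fib (j + 1) * Nat.fib (r + 2) * fibFact n := by
          show Nat.fib (n + 1) * fibFact n = _
          rw [hfib]; ring
        rw [hsplit]
        apply Nat.dvd_add
        · -- uses IH at k = j+1 : fibFact (j+1) * fibFact r ∣ fibFact n
          have h2 : fibFact (j + 1) * fibFact r ∣ fibFact n := by
            have := ih (j + 1) hjn; rwa [← hr] at this
          obtain ⟨c, hc⟩ := h2
          refine ⟨Nat.fib j * c, ?_⟩
          have : fibFact (r + 1) = Nat.fib (r + 1) * fibFact r := rfl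
          rw [hc, this]; ring
        · -- uses IH at k = j : fibFact j * fibFact (r+1) ∣ fibFact n
          have h3 : fibFact j * fibFact (r + 1) ∣ fibFact n := by
            have := ih j (by omega)
            have e : n - j = r + 1 := by omega
            rwa [e] at this
          obtain ⟨c, hc⟩ := h3
          refine ⟨Nat.fib (r + 2) * c, ?_⟩
          have : fibFact (j + 1) = Nat.fib (j + 1) * fibFact j := rfl
          rw [hc, this]; ring

lemma exists_C (n k : ℕ) (hk : 1 ≤ k) (hkn : k ≤ n) :
    ∃ C : ℕ, C * (fibFact k * fibFact (n - k) * fibFact (k - 1) * fibFact (n - k + 1)) =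
      fibFact n * fibFact (n - 1) * Nat.fib (n - k + 1) := by
  obtain ⟨c1, hc1⟩ := fibFact_dvd n k hkn
  have h2 : fibFact (k - 1) * fibFact (n - k) ∣ fibFact (n - 1) := by
    have := fibFact_dvd (n - 1) (k - 1) (by omega)
    have e : n - 1 - (k - 1) = n - k := by omega
    rwa [e] at this
  obtain ⟨c2, hc2⟩ := h2
  refine ⟨c1 * c2, ?_⟩
  have e : fibFact (n - k + 1) = Nat.fib (n - k + 1) * fibFact (n - k) := rfl
  rw [hc1, hc2, e]; ring

lemma exists_B (n k : ℕ) (hk : 1 ≤ k) (hkn : k ≤ n) :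
    ∃ B : ℕ, B * (fibFact k * fibFact (n - k) * fibFact (k - 1) * fibFact (n - k + 1)) =
      fibFact n * fibFact (n - 1) * Nat.fib (n - k) := by
  rcases eq_or_lt_of_le hkn with h | h
  · subst h; exact ⟨0, by simp⟩
  · have h1 : fibFact (k - 1) * fibFact (n - k + 1) ∣ fibFact n := by
      have := fibFact_dvd n (k - 1) (by omega)
      have e : n - (k - 1) = n - k + 1 := by omega
      rwa [e] at this
    obtain ⟨c1, hc1⟩ := h1
    have h2 : fibFact k * fibFact (n - 1 - k) ∣ fibFact (n - 1) := by
      exact fibFact_dvd (n - 1) k (by omega)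
    obtain ⟨c2, hc2⟩ := h2
    refine ⟨c1 * c2, ?_⟩
    have e : fibFact (n - k) = Nat.fib (n - k) * fibFact (n - k - 1) := by
      have : n - k = (n - k - 1) + 1 := by omega
      rw [this]; rfl
    have e2 : n - 1 - k = n - k - 1 := by omega
    rw [hc1, hc2, e, e2]; ring

theorem fiboNarayana_factorial_ratio_pos_int (n k : ℕ) (hn : 1 ≤ n) (hk : 1 ≤ k)
    (hkn : k ≤ n) :
    ∃ m : ℕ, 0 < m ∧
      (fibFact n * fibFact (n - 1) : ℚ) /
          (fibFact k * fibFact (n - k) * fibFact (k - 1) * fibFact (n - k + 1)) = m := by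
  obtain ⟨C, hC⟩ := exists_C n k hk hkn
  obtain ⟨B, hB⟩ := exists_B n k hk hkn
  set D : ℕ := fibFact k * fibFact (n - k) * fibFact (k - 1) * fibFact (n - k + 1) with hD
  have hDpos : 0 < D := by
    apply Nat.mul_pos; apply Nat.mul_pos; apply Nat.mul_pos
    all_goals exact fibFact_pos _
  have hDQ : (D : ℚ) ≠ 0 := by positivity
  set E : ℚ := (fibFact n * fibFact (n - 1) : ℚ) / (D : ℚ) with hE
  have hEC : E * Nat.fib (n - k + 1) = C := by
    rw [hE, div_mul_eq_mul_div, div_eq_iff hDQ]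
    exact_mod_cast hC.symm
  have hEB : E * Nat.fib (n - k) = B := by
    rw [hE, div_mul_eq_mul_div, div_eq_iff hDQ]
    exact_mod_cast hB.symm
  -- Bezout
  have hcop : Nat.Coprime (Nat.fib (n - k)) (Nat.fib (n - k + 1)) :=
    Nat.fib_coprime_fib_succ _
  set a := Nat.fib (n - k)
  set b := Nat.fib (n - k + 1)
  have hbez : (1 : ℤ) = a * Nat.gcdA a b + b * Nat.gcdB a b := by
    have := Nat.gcd_eq_gcd_ab a b
    rwa [hcop] at this
  set x := Nat.gcdA a b
  set y := Nat.gcdB a b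
  have key : E = ((B * x + C * y : ℤ) : ℚ) := by
    have : E = E * ((a * x + b * y : ℤ) : ℚ) := by rw [← hbez]; simp
    rw [this]
    push_cast
    rw [← hEB, ← hEC]
    ring
  have hEpos : 0 < E := by
    rw [hE]
    apply div_pos
    · have := fibFact_pos n; have := fibFact_pos (n - 1); positivity
    · exact_mod_cast hDpos
  set z : ℤ := B * x + C * y with hz
  have hzpos : 0 < z := by
    have : (0 : ℚ) < (z : ℚ) := key ▸ hEpos
    exact_mod_cast this
  refine ⟨z.toNat, by omega, ?_⟩
  have : E = (z.toNat : ℚ) := by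
    rw [key]; congr 1; omega
  simpa [hE, hD] using this
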